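/- arXiv:2210.10347 — 4 statements merged into one kernel-verified Lean document; each statement's English description precedes it below -/
import Mathlib

section
/- Let Γ be a finite group and k a natural number coprime to |Γ|. If χ is the character of an irreducible finite-dimensional complex representation of Γ, then the class function g ↦ χ(g^k) is again the character of an irreducible finite-dimensional complex representation of Γ. -/
/-!
Let `n = |Γ|`. Since `k` is coprime to `n`, `ζ ↦ ζ ^ k` on `n`-th roots of unity is induced by an
automorphism of the cyclotomic field `ℚ(μₙ)`, and, `ℂ` being an uncountable algebraically closed
field, any two embeddings of a countable field into `ℂ` differ by an automorphism of `ℂ` (match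
transcendence bases). This gives `σ : ℂ ≃+* ℂ` with `σ ζ = ζ ^ k` whenever `ζ ^ n = 1`.

Applying `σ` to the matrix coefficients of `U` yields a representation with character `σ ∘ χ`.
Each `U.ρ g` is diagonalisable with `n`-th roots of unity as eigenvalues, so
`σ (χ g) = ∑ σ λᵢ = ∑ λᵢ ^ k = χ (g ^ k)`. Irreducibility survives because `σ` fixes
`∑ χ(g) χ(g⁻¹) = |Γ|`, which characterises irreducible characters.
-/

open CategoryTheory Module Polynomial Cardinal

universe u

theorem IsAlgClosed.exists_ringEquiv_comp_eq {K₀ K L : Type u} [Field K₀] [Countable K₀]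
    [Field K] [IsAlgClosed K] [Field L] [IsAlgClosed L] (hK : ℵ₀ < #K) (hKL : #K = #L)
    (f : K₀ →+* K) (g : K₀ →+* L) :
    ∃ φ : K ≃+* L, (φ : K →+* L).comp f = g := by
  let _ := f.toAlgebra
  let _ := g.toAlgebra
  obtain ⟨s, hs⟩ := exists_isTranscendenceBasis K₀ K
  obtain ⟨t, ht⟩ := exists_isTranscendenceBasis K₀ L
  have hcard : #s = #t := by
    rw [← cardinal_eq_cardinal_transcendence_basis_of_aleph0_lt' _ hs mk_le_aleph0 hK,
      ← cardinal_eq_cardinal_transcendence_basis_of_aleph0_lt' _ ht mk_le_aleph0 (hKL ▸ hK), hKL]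
  obtain ⟨e⟩ := Cardinal.eq.1 hcard
  refine ⟨equivOfTranscendenceBasis _ _ e hs ht, RingHom.ext fun x => ?_⟩
  let _ := isAlgClosure_of_transcendence_basis _ hs
  let _ := isAlgClosure_of_transcendence_basis _ ht
  simp only [RingHom.comp_apply, RingEquiv.coe_toRingHom, equivOfTranscendenceBasis]
  rw [show f x = algebraMap K₀ K x from rfl,
    IsScalarTower.algebraMap_apply K₀ (Algebra.adjoin K₀ (Set.range ((↑) : s → K))) K,
    IsAlgClosure.equivOfEquiv_algebraMap]
  simp only [RingEquiv.trans_apply, AlgEquiv.coe_ringEquiv, AlgEquiv.commutes]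
  rfl

theorem IsCyclotomicExtension.exists_ringHom_apply_zeta_eq {n : ℕ} [NeZero n] {K C : Type*}
    [Field K] [Algebra ℚ K] [IsCyclotomicExtension {n} ℚ K] [CommRing C] [IsDomain C]
    [Algebra ℚ C] {ω : C} (hω : IsPrimitiveRoot ω n) : ∃ f : K →+* C, f (zeta n ℚ K) = ω := by
  have hirr := cyclotomic.irreducible_rat (NeZero.pos n)
  let f := ((zeta_spec n ℚ K).embeddingsEquivPrimitiveRoots C hirr).symm
    ⟨ω, (mem_primitiveRoots (NeZero.pos n)).2 hω⟩
  have hf := (zeta_spec n ℚ K).embeddingsEquivPrimitiveRoots_apply_coe C hirr f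
  simp only [f, Equiv.apply_symm_apply] at hf
  exact ⟨f, hf.symm⟩

theorem Complex.exists_ringEquiv_apply_eq_pow_of_coprime (n k : ℕ) [NeZero n]
    (hk : k.Coprime n) : ∃ φ : ℂ ≃+* ℂ, ∀ z : ℂ, z ^ n = 1 → φ z = z ^ k := by
  -- `CyclotomicField.isCyclotomicExtension` is about this `Algebra ℚ` instance, which is not the
  -- one instance search finds by default
  let _ := CyclotomicField.algebra n ℚ
  have := CyclotomicField.isCyclotomicExtension n ℚ
  have : Countable (CyclotomicField n ℚ) :=
    (Module.Free.chooseBasis ℚ (CyclotomicField n ℚ)).repr.toEquiv.injective.countable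
  obtain ⟨ζ, hζ⟩ : ∃ ζ : ℂ, IsPrimitiveRoot ζ n := ⟨_, isPrimitiveRoot_exp n (NeZero.ne n)⟩
  obtain ⟨f, hf⟩ := IsCyclotomicExtension.exists_ringHom_apply_zeta_eq
    (K := CyclotomicField n ℚ) hζ
  obtain ⟨g, hg⟩ := IsCyclotomicExtension.exists_ringHom_apply_zeta_eq
    (K := CyclotomicField n ℚ) (hζ.pow_of_coprime k hk)
  obtain ⟨φ, hφ⟩ := IsAlgClosed.exists_ringEquiv_comp_eq
    (mk_complex ▸ aleph0_lt_continuum) rfl f g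
  have hφζ : φ ζ = ζ ^ k := by
    rw [← hg, ← hφ, ← hf]
    rfl
  refine ⟨φ, fun z hz => ?_⟩
  obtain ⟨a, -, rfl⟩ := hζ.eq_pow_of_pow_eq_one hz
  rw [map_pow, hφζ, pow_right_comm]

theorem LinearMap.toMatrix_pow_eq_diagonal {K M ι : Type*} [Field K] [AddCommGroup M]
    [Module K M] [Fintype ι] [DecidableEq ι] (b : Basis ι K M) {A : End K M} {μ : ι → K}
    (hA : ∀ i, A (b i) = μ i • b i) (j : ℕ) :
    LinearMap.toMatrix b b (A ^ j) = Matrix.diagonal (μ ^ j) := by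
  have hdiag : LinearMap.toMatrix b b A = Matrix.diagonal μ := by
    ext i i'
    rcases eq_or_ne i i' with rfl | h
    · simp [LinearMap.toMatrix_apply, hA]
    · simp [LinearMap.toMatrix_apply, hA, h]
  rw [← LinearMap.toMatrix_pow, hdiag, Matrix.diagonal_pow]

theorem Module.End.isSemisimple_of_pow_eq_one {K M : Type*} [Field K] [AddCommGroup M]
    [Module K M] {A : End K M} {n : ℕ} (hn : (n : K) ≠ 0) (hA : A ^ n = 1) : A.IsSemisimple :=
  isSemisimple_of_squarefree_aeval_eq_zero (separable_X_pow_sub_C 1 hn one_ne_zero).squarefree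
    (by simp [hA])

theorem Module.End.map_trace_eq_trace_pow {K M : Type*} [Field K] [IsAlgClosed K]
    [AddCommGroup M] [Module K M] [FiniteDimensional K M] {A : End K M} {n : ℕ}
    (hn : (n : K) ≠ 0) (hA : A ^ n = 1) (k : ℕ) (σ : K →+* K)
    (hσ : ∀ z : K, z ^ n = 1 → σ z = z ^ k) :
    σ (LinearMap.trace K M A) = LinearMap.trace K M (A ^ k) := by
  classical
  have hdecomp := DirectSum.isInternal_submodule_of_iSupIndep_of_iSup_eq_top
    A.eigenspaces_iSupIndep (isSemisimple_of_pow_eq_one hn hA).iSup_eigenspace_eq_top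
  let I := (μ : K) × Fin (finrank K (A.eigenspace μ))
  let v : Basis I K M := hdecomp.collectedBasis fun μ ↦ finBasis K (A.eigenspace μ)
  have : Fintype I := FiniteDimensional.fintypeBasisIndex v
  have hv (i : I) : A (v i) = i.1 • v i := mem_eigenspace_iff.mp (hdecomp.collectedBasis_mem _ i)
  have hroot (i : I) : i.1 ^ n = 1 := by
    simpa [hA, eq_comm] using congr_fun₂ (LinearMap.toMatrix_pow_eq_diagonal v hv n) i i
  have htrace (j : ℕ) : LinearMap.trace K M (A ^ j) = ∑ i : I, i.1 ^ j := by
    rw [LinearMap.trace_eq_matrix_trace K v, LinearMap.toMatrix_pow_eq_diagonal v hv,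
      Matrix.trace_diagonal]
    rfl
  conv_lhs => rw [← pow_one A, htrace, map_sum]
  simp [htrace, hσ _ (hroot _)]

namespace FDRep

variable {k G : Type u} [Field k]

noncomputable def galoisConj [Monoid G] (σ : k →+* k) (V : FDRep k G) : FDRep k G :=
  FDRep.of <| Matrix.toLinAlgEquiv'.toMonoidHom.comp <| σ.mapMatrix.toMonoidHom.comp <|
    (LinearMap.toMatrixAlgEquiv (finBasis k V)).toMonoidHom.comp V.ρ

theorem character_galoisConj [Monoid G] (σ : k →+* k) (V : FDRep k G) (g : G) :
    (V.galoisConj σ).character g = σ (V.character g) := by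
  change LinearMap.trace k _ (Matrix.toLin' ((LinearMap.toMatrix (finBasis k V) (finBasis k V)
    (V.ρ g)).map σ)) = σ (LinearMap.trace k V (V.ρ g))
  rw [Matrix.trace_toLin'_eq, LinearMap.trace_eq_matrix_trace k (finBasis k V),
    AddMonoidHom.map_trace]

theorem simple_galoisConj [Group G] [Fintype G] [IsAlgClosed k] [CharZero k] (σ : k →+* k)
    (V : FDRep k G) [Simple V] : Simple (V.galoisConj σ) := by
  have hV := (simple_iff_char_is_norm_one V).1 ‹_›
  rw [simple_iff_char_is_norm_one]
  simp only [character_galoisConj, ← map_mul, ← map_sum, hV, map_natCast]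

end FDRep

/-- **Adams operations coprime to the group order preserve irreducible characters.**
Let `Γ` be a finite group and `k` a natural number coprime to `|Γ|`.  If `χ` is the character
of an irreducible finite-dimensional complex representation of `Γ`, then the class function
`g ↦ χ(gᵏ)` is again the character of an irreducible finite-dimensional complex
representation of `Γ`. -/
theorem stmt7 (Γ : Type) [Group Γ] [Fintype Γ] (k : ℕ)
    (hk : Nat.Coprime k (Fintype.card Γ))
    (U : FDRep ℂ Γ) (hU : CategoryTheory.Simple U) :
    ∃ V : FDRep ℂ Γ, CategoryTheory.Simple V ∧
      ∀ g : Γ, U.character (g ^ k) = V.character g := by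
  obtain ⟨σ, hσ⟩ := Complex.exists_ringEquiv_apply_eq_pow_of_coprime (Fintype.card Γ) k hk
  refine ⟨U.galoisConj (σ : ℂ →+* ℂ), FDRep.simple_galoisConj _ U, fun g => ?_⟩
  rw [FDRep.character_galoisConj, FDRep.character, FDRep.character, map_pow,
    Module.End.map_trace_eq_trace_pow (Nat.cast_ne_zero.2 Fintype.card_ne_zero)
      (by rw [← map_pow, pow_card_eq_one, map_one]) k _ hσ]
end

section
/- Let Γ be a finite group, k a natural number coprime to |Γ|, and J a subgroup of Γ. Then the k-th Adams operation commutes with induction of class functions from J to Γ: for every complex class function φ on J one has ψ_k(Ind_J^Γ φ) = Ind_J^Γ(ψ_k φ). -/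
open scoped Classical

/-- The induced class function: for a complex class function `φ` on a subgroup `J` of `Γ`,
`Ind_J^Γ φ (g) = |J|⁻¹ · Σ_{x ∈ Γ, x⁻¹gx ∈ J} φ(x⁻¹gx)`. -/
noncomputable def inducedClassFun (Γ : Type) [Group Γ] [Fintype Γ] (J : Subgroup Γ)
    (φ : J → ℂ) : Γ → ℂ :=
  fun g => (Nat.card J : ℂ)⁻¹ *
    ∑ x : Γ, if h : x⁻¹ * g * x ∈ J then φ ⟨x⁻¹ * g * x, h⟩ else 0

lemma pow_mem_iff_aux (Γ : Type) [Group Γ] [Fintype Γ] (k : ℕ)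
    (hk : Nat.Coprime k (Fintype.card Γ)) (J : Subgroup Γ) (y : Γ) :
    y ^ k ∈ J ↔ y ∈ J := by
  have hc : (Nat.card Γ).Coprime k := by rw [Nat.card_eq_fintype_card]; exact hk.symm
  constructor
  · intro h
    have hy : (y ^ k) ^ ((Nat.card Γ).gcdB k) = y := (powCoprime hc).left_inv y
    rw [← hy]
    exact J.zpow_mem h _
  · intro h
    exact J.pow_mem h k

/-- **Adams operations coprime to the group order commute with induction of class functions.**
Let `Γ` be a finite group, `k` a natural number coprime to `|Γ|`, and `J` a subgroup of `Γ`.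
Then for every complex class function `φ` on `J` one has
`ψ_k(Ind_J^Γ φ) = Ind_J^Γ(ψ_k φ)`. -/
theorem stmt8 (Γ : Type) [Group Γ] [Fintype Γ] (k : ℕ)
    (hk : Nat.Coprime k (Fintype.card Γ)) (J : Subgroup Γ) (φ : J → ℂ)
    (hφ : ∀ j h : J, φ (h * j * h⁻¹) = φ j) :
    ∀ g : Γ, inducedClassFun Γ J φ (g ^ k) =
      inducedClassFun Γ J (fun j => φ (j ^ k)) g := by
  intro g
  unfold inducedClassFun
  congr 1
  refine Finset.sum_congr rfl fun x _ => ?_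
  have hconj : x⁻¹ * g ^ k * x = (x⁻¹ * g * x) ^ k := by
    simpa using map_pow (MulAut.conj x⁻¹) g k
  have hmem : x⁻¹ * g ^ k * x ∈ J ↔ x⁻¹ * g * x ∈ J := by
    rw [hconj]; exact pow_mem_iff_aux Γ k hk J _
  by_cases h : x⁻¹ * g * x ∈ J
  · rw [dif_pos (hmem.mpr h), dif_pos h]
    congr 1
    ext
    simp [hconj]
  · rw [dif_neg (fun hh => h (hmem.mp hh)), dif_neg h]
end

section
/- Let E/F be a finite Galois extension of fields with Γ = Gal(E/F), let Δ be a subgroup of Γ and B = E^Δ the fixed field of Δ. Then the map j : B ⊗_F E → Map_Δ(Γ, E) defined by j(x ⊗ y)(g) = x·g(y) is an isomorphism of B[Γ]-modules. -/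
/-!
Both sides are `B`-modules and `j` is the `B`-linear extension of `1 ⊗ y ↦ (g ↦ g y)`. For an
`F`-basis `(yᵢ)` of `E`, the matrix `(g yᵢ)` is square because `E/F` is Galois, and its rows are
linearly independent by Dedekind's lemma; hence so are its columns, which are the images of the
`B`-basis `1 ⊗ yᵢ` of `B ⊗_F E`, and `j` is injective. Its image lies in `Map_Δ(Γ, E)` since `Δ`
fixes `B`. A `Δ`-equivariant map is determined by its values on representatives of `Δ \ Γ`, so
`dim_F Map_Δ(Γ, E) ≤ [Γ : Δ] · [E : F] = [B : F] · [E : F] = dim_F (B ⊗_F E)`, so the image is all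
of `Map_Δ(Γ, E)`.
-/

open scoped TensorProduct

/-- The map `j : B ⊗_F E → (Γ → E)`, `j(x ⊗ y)(g) = x·g(y)`, where `B = E^Δ` for a subgroup
`Δ` of `Γ = Gal(E/F)`. -/
noncomputable def jMap (F E : Type*) [Field F] [Field E] [Algebra F E]
    (Δ : Subgroup (E ≃ₐ[F] E)) (z : (IntermediateField.fixedField Δ) ⊗[F] E) :
    (E ≃ₐ[F] E) → E :=
  fun g => Algebra.TensorProduct.productMap (IntermediateField.fixedField Δ).val
    (g : E →ₐ[F] E) z

theorem Matrix.linearIndependent_col_of_row {R m n : Type*} [Field R] [Fintype m] [Fintype n]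
    {M : Matrix m n R} (h : LinearIndependent R M.row) (hmn : Fintype.card m = Fintype.card n) :
    LinearIndependent R M.col := by
  rw [linearIndependent_iff_card_eq_finrank_span, ← hmn, ← h.rank_matrix,
    M.rank_eq_finrank_span_cols]
  rfl

theorem Representation.finrank_coindV_subtype_le {k G A : Type*} [Field k] [Group G]
    {S : Subgroup G} [S.FiniteIndex] [AddCommGroup A] [Module k A] [FiniteDimensional k A]
    (σ : Representation k S A) :
    Module.finrank k (coindV S.subtype σ) ≤ S.index * Module.finrank k A := by
  have : Fintype (G ⧸ S) := Fintype.ofFinite _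
  -- `q.out⁻¹` runs through representatives of the right cosets `S g`.
  let res : coindV S.subtype σ →ₗ[k] (G ⧸ S → A) :=
    LinearMap.pi fun q => (LinearMap.proj q.out⁻¹).comp (coindV S.subtype σ).subtype
  have hres : Function.Injective res := by
    rw [← LinearMap.ker_eq_bot, LinearMap.ker_eq_bot']
    intro f hf
    ext g
    obtain ⟨s, hs⟩ := QuotientGroup.mk_out_eq_mul S g⁻¹
    have hf0 : (f : G → A) (QuotientGroup.mk (s := S) g⁻¹).out⁻¹ = 0 := congrFun hf _
    rw [hs, mul_inv_rev, inv_inv] at hf0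
    calc (f : G → A) g = (f : G → A) (S.subtype s * ((s : G)⁻¹ * g)) := by simp
      _ = σ s ((f : G → A) ((s : G)⁻¹ * g)) := f.2 s _
      _ = 0 := by rw [hf0, map_zero]
  calc Module.finrank k (coindV S.subtype σ) ≤ Module.finrank k (G ⧸ S → A) :=
        LinearMap.finrank_le_finrank_of_injective hres
    _ = S.index * Module.finrank k A := by
        rw [Module.finrank_pi_fintype, Finset.sum_const, Finset.card_univ, smul_eq_mul,
          ← Nat.card_eq_fintype_card, Subgroup.index]

section Galois

variable {F E : Type*} [Field F] [Field E] [Algebra F E]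

theorem AlgEquiv.linearIndependent_apply_basis {ι : Type*} (y : Module.Basis ι F E) :
    LinearIndependent E fun (g : E ≃ₐ[F] E) i => g (y i) :=
  ((linearIndependent_algHom_toLinearMap F E E).comp _ AlgEquiv.coe_toAlgHom_injective).map'
    (y.constr E).symm.toLinearMap (LinearEquiv.ker _)

theorem IsGalois.linearIndependent_eval_basis [FiniteDimensional F E] [IsGalois F E] {ι : Type*}
    [Fintype ι] (y : Module.Basis ι F E) :
    LinearIndependent E fun i (g : E ≃ₐ[F] E) => g (y i) :=
  Matrix.linearIndependent_col_of_row (M := Matrix.of fun (g : E ≃ₐ[F] E) i => g (y i))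
    (AlgEquiv.linearIndependent_apply_basis y) (by
      rw [← Module.finrank_eq_card_basis y, ← Nat.card_eq_fintype_card,
        IsGalois.card_aut_eq_finrank])

variable (K : IntermediateField F E)

noncomputable def tensorAutEval : K ⊗[F] E →ₐ[K] ((E ≃ₐ[F] E) → E) :=
  AlgHom.pi fun g => Algebra.TensorProduct.productLeftAlgHom (Algebra.ofId K E) (g : E →ₐ[F] E)

@[simp]
theorem tensorAutEval_tmul (x : K) (y : E) (g : E ≃ₐ[F] E) :
    tensorAutEval K (x ⊗ₜ y) g = x * g y :=
  rfl

theorem tensorAutEval_injective [FiniteDimensional F E] [IsGalois F E] :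
    Function.Injective (tensorAutEval K) := by
  let y := Module.finBasis F E
  refine LinearMap.injective_of_linearIndependent (f := (tensorAutEval K).toLinearMap)
    (Algebra.TensorProduct.basis K y).span_eq ?_
  have hb : ⇑(tensorAutEval K).toLinearMap ∘ Algebra.TensorProduct.basis K y =
      fun i (g : E ≃ₐ[F] E) => g (y i) := by
    funext i g
    simp
  rw [hb]
  exact (IsGalois.linearIndependent_eval_basis y).restrict_scalars' K

open IntermediateField Representation

theorem tensorAutEval_fixedField_mem_coindV (Δ : Subgroup (E ≃ₐ[F] E))
    (z : fixedField Δ ⊗[F] E) :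
    tensorAutEval (fixedField Δ) z ∈
      coindV Δ.subtype ((AlgEquiv.toLinearMapHom F E).comp Δ.subtype) := by
  induction z using TensorProduct.induction_on with
  | zero => simp
  | tmul x y =>
    intro h g
    simp [(mem_fixedField_iff Δ x).mp x.2 h h.2]
  | add u v hu hv => simpa using add_mem hu hv

theorem range_tensorAutEval_fixedField [FiniteDimensional F E] [IsGalois F E]
    (Δ : Subgroup (E ≃ₐ[F] E)) :
    LinearMap.range ((tensorAutEval (fixedField Δ)).toLinearMap.restrictScalars F) =
      coindV Δ.subtype ((AlgEquiv.toLinearMapHom F E).comp Δ.subtype) := by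
  set j := (tensorAutEval (fixedField Δ)).toLinearMap.restrictScalars F
  refine Submodule.eq_of_le_of_finrank_le ?_ ?_
  · rintro _ ⟨z, rfl⟩
    exact tensorAutEval_fixedField_mem_coindV Δ z
  · calc _ ≤ Δ.index * Module.finrank F E := finrank_coindV_subtype_le _
      _ = Module.finrank F (fixedField Δ) * Module.finrank F E := by
        rw [finrank_eq_fixingSubgroup_index, fixingSubgroup_fixedField]
      _ = Module.finrank F (LinearMap.range j) := by
        rw [LinearMap.finrank_range_of_inj (tensorAutEval_injective _),
          Module.finrank_tensorProduct]

end Galois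

/-- **Fröhlich's isomorphism `B ⊗_F E ≅ Map_Δ(Γ, E)`.**
Let `E/F` be a finite Galois extension of fields with `Γ = Gal(E/F)`, let `Δ` be a subgroup
of `Γ` and `B = E^Δ` the fixed field of `Δ`.  Then the map `j : B ⊗_F E → Map_Δ(Γ, E)`
defined by `j(x ⊗ y)(g) = x·g(y)` is an isomorphism of `B[Γ]`-modules: it is injective and
additive, with image exactly the set `Map_Δ(Γ, E)` of maps `f : Γ → E` satisfying
`f(hg) = h(f(g))` for all `h ∈ Δ`, `g ∈ Γ`; it is `B`-linear (for the `B`-module structure on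
the left tensor factor); and it is `Γ`-equivariant, where `γ ∈ Γ` acts on `B ⊗_F E` by
`x ⊗ y ↦ x ⊗ γ(y)` and on maps by `(γ·f)(g) = f(gγ)`. -/
theorem stmt9 (F E : Type*) [Field F] [Field E] [Algebra F E]
    [FiniteDimensional F E] [IsGalois F E] (Δ : Subgroup (E ≃ₐ[F] E)) :
    Function.Injective (jMap F E Δ) ∧
    (Set.range (jMap F E Δ) =
      {f : (E ≃ₐ[F] E) → E | ∀ h ∈ Δ, ∀ g : E ≃ₐ[F] E, f (h * g) = h (f g)}) ∧
    (∀ z w, jMap F E Δ (z + w) = jMap F E Δ z + jMap F E Δ w) ∧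
    (∀ (b : IntermediateField.fixedField Δ) (z : (IntermediateField.fixedField Δ) ⊗[F] E)
        (g : E ≃ₐ[F] E), jMap F E Δ (b • z) g = (b : E) * jMap F E Δ z g) ∧
    (∀ (γ : E ≃ₐ[F] E) (x : IntermediateField.fixedField Δ) (y : E) (g : E ≃ₐ[F] E),
        jMap F E Δ (x ⊗ₜ[F] (γ y)) g = jMap F E Δ (x ⊗ₜ[F] y) (g * γ)) := by
  have hj : jMap F E Δ = tensorAutEval (IntermediateField.fixedField Δ) := rfl
  rw [hj]
  refine ⟨tensorAutEval_injective _, ?_, map_add _, fun b z g => ?_, fun _ _ _ _ => rfl⟩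
  · have hrange := congrArg SetLike.coe (range_tensorAutEval_fixedField Δ)
    rw [LinearMap.coe_range] at hrange
    rw [← AlgHom.coe_toLinearMap, ← LinearMap.coe_restrictScalars F, hrange]
    ext f
    exact Subtype.forall
  · exact congrFun (map_smul (tensorAutEval _) b z) g
end

section
/- Let E/F be a tamely ramified finite Galois extension of p-adic fields with Γ = Gal(E/F), Δ = Γ₀ the inertia subgroup and B = E^Δ. Suppose v_E(D_{E/F}) is even, so that A := A_{E/F} exists, and let b ∈ E be such that A = O_B[Δ]·b. Define h_b : Γ → E by h_b(g) = g(b) if g ∈ Δ and h_b(g) = 0 if g ∈ Γ∖Δ. Then h_b belongs to Map_Δ(Γ, A) and h_b generates Map_Δ(Γ, A) freely as an O_B[Γ]-module. -/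
set_option synthInstance.maxHeartbeats 1000000
set_option maxHeartbeats 1000000

open scoped nonZeroDivisors TensorProduct Classical

/-- `σ` lies in the `i`-th ramification group (in lower numbering) of `Gal(E/F)` relative to
the ideal `M` of the valuation ring `O_E = integralClosure ℤ_[p] E`:
`σ(x) − x ∈ M^{i+1}` for all `x ∈ O_E`. -/
def inRamificationGroup (p : ℕ) [Fact p.Prime] (F E : Type*) [Field F] [Field E]
    [Algebra ℚ_[p] E] [Algebra ℤ_[p] E] [IsScalarTower ℤ_[p] ℚ_[p] E] [Algebra F E]
    (M : Ideal ↥(integralClosure ℤ_[p] E)) (i : ℕ) (σ : E ≃ₐ[F] E) : Prop :=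
  ∀ x : ↥(integralClosure ℤ_[p] E), ∃ y ∈ M ^ (i + 1), (y : E) = σ (x : E) - (x : E)

/-- The square root of the inverse different `A_{E/F} = m_E^{−d/2}` (where `d = v_E(𝔇_{E/F})`),
viewed as a submodule of `E` over the valuation ring `O_E`. -/
noncomputable def sqrtInvDiff (p : ℕ) [Fact p.Prime] (E : Type*) [Field E]
    [Algebra ℚ_[p] E] [FiniteDimensional ℚ_[p] E]
    [Algebra ℤ_[p] E] [IsScalarTower ℤ_[p] ℚ_[p] E]
    [IsDedekindDomain ↥(integralClosure ℤ_[p] E)]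
    [IsFractionRing ↥(integralClosure ℤ_[p] E) E]
    (M : Ideal ↥(integralClosure ℤ_[p] E)) (d : ℕ) :
    Submodule ↥(integralClosure ℤ_[p] E) E :=
  (((M : FractionalIdeal (↥(integralClosure ℤ_[p] E))⁰ E) ^ (-((d / 2 : ℕ) : ℤ)) :
    FractionalIdeal (↥(integralClosure ℤ_[p] E))⁰ E) : Submodule ↥(integralClosure ℤ_[p] E) E)

/-- The map `h_b : Γ → E` attached to `b ∈ E` and the subgroup `Δ ≤ Γ = Gal(E/F)`:
`h_b(g) = g(b)` for `g ∈ Δ` and `h_b(g) = 0` otherwise. -/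
noncomputable def hMap (F E : Type*) [Field F] [Field E] [Algebra F E]
    (Δ : Subgroup (E ≃ₐ[F] E)) (b : E) : (E ≃ₐ[F] E) → E :=
  fun g => if g ∈ Δ then g b else 0

/-!
Since `A = O_B[Δ]·b` is a nonzero `O_E`-lattice in `E`, the conjugates `δ b` (`δ ∈ Δ`) span `E`
over `B = E^Δ`, and as `|Δ| = [E : B]` they form a `B`-basis of `E`, in which the coordinates of
every element of `A` lie in `O_B`. Reindexing gives
`Σ_γ c_γ h_b(gγ) = Σ_{δ ∈ Δ} c_{g⁻¹δ} δ(b)`, so `f = Σ_γ c_γ (γ·h_b)` forces `c_γ` to be the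
coordinate of `f(γ⁻¹)` at `δ = 1`, and `Δ`-equivariance of `f` shows that this choice works.
-/

open IntermediateField

section Conjugates

variable {F E : Type*} [Field F] [Field E] [Algebra F E] (Δ : Subgroup (E ≃ₐ[F] E)) (b : E)

theorem hMap_mul_of_mem {h : E ≃ₐ[F] E} (hh : h ∈ Δ) (g : E ≃ₐ[F] E) :
    hMap F E Δ b (h * g) = h (hMap F E Δ b g) := by
  by_cases hg : g ∈ Δ
  · simp [hMap, hg, Δ.mul_mem hh hg, AlgEquiv.mul_apply]
  · simp [hMap, hg, (Δ.mul_mem_cancel_left hh).not.mpr hg]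

theorem hMap_mem {S : Type*} [SetLike S E] [ZeroMemClass S E] {s : S}
    (hs : ∀ δ : Δ, (δ : E ≃ₐ[F] E) b ∈ s) (g : E ≃ₐ[F] E) : hMap F E Δ b g ∈ s := by
  unfold hMap
  split_ifs with hg
  · exact hs ⟨g, hg⟩
  · exact zero_mem s

theorem sum_mul_hMap_mul [Fintype (E ≃ₐ[F] E)] (c : (E ≃ₐ[F] E) → E) (g : E ≃ₐ[F] E) :
    ∑ γ, c γ * hMap F E Δ b (g * γ) = ∑ δ : Δ, c (g⁻¹ * δ) * (δ : E ≃ₐ[F] E) b := by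
  rw [Fintype.sum_equiv (Equiv.mulLeft g) _ (fun γ => c (g⁻¹ * γ) * hMap F E Δ b γ)
    (fun γ => by simp)]
  simp only [hMap, mul_ite, mul_zero]
  rw [← Finset.sum_filter]
  exact Finset.sum_subtype _ (fun x => by simp) _

variable {Δ}

theorem apply_smul_of_mem_fixedField {δ : E ≃ₐ[F] E} (hδ : δ ∈ Δ) (k : fixedField Δ) (x : E) :
    δ (k • x) = k • δ x := by
  rw [Algebra.smul_def, Algebra.smul_def, map_mul]
  congr 1
  exact k.2 ⟨δ, hδ⟩

variable [Fintype (E ≃ₐ[F] E)]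

theorem exists_basis_conj_of_top_le_span [FiniteDimensional F E]
    (hspan : ⊤ ≤ Submodule.span (fixedField Δ) (Set.range fun δ : Δ => (δ : E ≃ₐ[F] E) b)) :
    ∃ v : Module.Basis Δ (fixedField Δ) E, ∀ δ, v δ = (δ : E ≃ₐ[F] E) b := by
  have hcard : Fintype.card Δ = Module.finrank (fixedField Δ) E := by
    rw [finrank_fixedField_eq_card, Fintype.card_eq_nat_card]
  exact ⟨basisOfTopLeSpanOfCardEqFinrank _ hspan hcard, fun δ => by
    rw [coe_basisOfTopLeSpanOfCardEqFinrank]⟩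

variable {b} {v : Module.Basis Δ (fixedField Δ) E}

theorem repr_conj_apply (hv : ∀ δ, v δ = (δ : E ≃ₐ[F] E) b) (δ : Δ) (x : E) (ε : Δ) :
    v.repr ((δ : E ≃ₐ[F] E) x) ε = v.repr x (δ⁻¹ * ε) := by
  have hδx : (δ : E ≃ₐ[F] E) x = ∑ ε : Δ, v.repr x (δ⁻¹ * ε) • v ε := calc
    (δ : E ≃ₐ[F] E) x = ∑ ε : Δ, v.repr x ε • v (δ * ε) := by
      conv_lhs => rw [← v.sum_repr x]
      simp only [map_sum, apply_smul_of_mem_fixedField δ.2, hv, Subgroup.coe_mul,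
        AlgEquiv.mul_apply]
    _ = ∑ ε : Δ, v.repr x (δ⁻¹ * ε) • v ε :=
      Fintype.sum_equiv (Equiv.mulLeft δ) _ _ (fun ε => by simp)
  rw [hδx, v.repr_sum_self]

theorem eq_sum_mul_hMap_iff (hv : ∀ δ, v δ = (δ : E ≃ₐ[F] E) b) {f : (E ≃ₐ[F] E) → E}
    (hf : ∀ h ∈ Δ, ∀ g, f (h * g) = h (f g)) (c : (E ≃ₐ[F] E) → fixedField Δ) :
    (∀ g, f g = ∑ γ, (c γ : E) * hMap F E Δ b (g * γ)) ↔ ∀ γ, c γ = v.repr (f γ⁻¹) 1 := by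
  have hsum (g : E ≃ₐ[F] E) :
      ∑ γ, (c γ : E) * hMap F E Δ b (g * γ) = ∑ δ : Δ, c (g⁻¹ * δ) • v δ := by
    simp only [sum_mul_hMap_mul, hv, Algebra.smul_def, IntermediateField.algebraMap_apply]
  simp only [hsum]
  constructor
  · intro hc γ
    have hcoord := congr(v.repr $(hc γ⁻¹) 1)
    rw [v.repr_sum_self, inv_inv, OneMemClass.coe_one, mul_one] at hcoord
    exact hcoord.symm
  · intro hc g
    have hcoord (δ : Δ) : c (g⁻¹ * δ) = v.repr (f g) δ := by
      rw [hc, mul_inv_rev, inv_inv, hf _ (Δ.inv_mem δ.2), ← Subgroup.coe_inv,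
        repr_conj_apply hv, inv_inv, mul_one]
    simp only [hcoord, v.sum_repr]

end Conjugates

theorem ne_bot_of_isMaximal_integralClosure {R S : Type*} [CommRing R] [CommRing S] [IsDomain S]
    [Algebra R S] (hR : ¬IsField R) (hinj : Function.Injective (algebraMap R S))
    {M : Ideal (integralClosure R S)} (hM : M.IsMaximal) : M ≠ ⊥ := by
  refine Ring.ne_bot_of_isMaximal_of_not_isField hM fun hfield => hR ?_
  have hinj' : Function.Injective (algebraMap R (integralClosure R S)) :=
    fun x y hxy => hinj congr(Subtype.val $hxy)
  exact (Algebra.IsIntegral.isField_iff_isField hinj').mpr hfield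

theorem Submodule.eq_top_of_integralClosure_mul_mem {R K E : Type*} [CommRing R] [Field K]
    [Field E] [Algebra R K] [Algebra R E] [Algebra K E] [IsScalarTower R K E]
    [Algebra.IsAlgebraic R E] (hinj : Function.Injective (algebraMap R E)) (V : Submodule K E)
    {a : E} (ha : a ≠ 0) (haV : ∀ y ∈ integralClosure R E, y * a ∈ V) : V = ⊤ := by
  refine eq_top_iff.mpr fun x _ => ?_
  obtain ⟨m, hm, hint⟩ :=
    (Algebra.IsAlgebraic.isAlgebraic (R := R) (x * a⁻¹)).exists_integral_multiple
  have hk : algebraMap R K m ≠ 0 := fun h =>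
    hm (hinj (by rw [IsScalarTower.algebraMap_apply R K E, h, map_zero, map_zero]))
  have hmx : algebraMap R K m • x ∈ V := by
    have := haV _ hint
    rwa [smul_mul_assoc, mul_assoc, inv_mul_cancel₀ ha, mul_one, ← algebraMap_smul K] at this
  exact (V.smul_mem_iff hk).mp hmx

theorem exists_basis_conj_repr_mem_integralClosure {R F E : Type*} [CommRing R] [Field F]
    [Field E] [Algebra F E] [FiniteDimensional F E] [Fintype (E ≃ₐ[F] E)] [Algebra R E]
    [Algebra.IsAlgebraic R E] (hinj : Function.Injective (algebraMap R E))
    {Δ : Subgroup (E ≃ₐ[F] E)} [Algebra R (fixedField Δ)] [IsScalarTower R (fixedField Δ) E]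
    {A : Submodule (integralClosure R E) E} (hA : A ≠ ⊥) {b : E}
    (hb : ∀ x : E, x ∈ A ↔ ∃ c : Δ → integralClosure R (fixedField Δ),
      x = ∑ h : Δ, ((c h : fixedField Δ) : E) * (h : E ≃ₐ[F] E) b) :
    ∃ v : Module.Basis Δ (fixedField Δ) E, (∀ δ, v δ = (δ : E ≃ₐ[F] E) b) ∧
      ∀ x ∈ A, ∀ δ, v.repr x δ ∈ integralClosure R (fixedField Δ) := by
  have hA_le_span : ∀ x ∈ A,
      x ∈ Submodule.span (fixedField Δ) (Set.range fun δ : Δ => (δ : E ≃ₐ[F] E) b) := by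
    intro x hx
    obtain ⟨c, rfl⟩ := (hb x).mp hx
    exact Submodule.sum_mem _ fun δ _ =>
      Submodule.smul_mem _ (c δ : fixedField Δ) (Submodule.subset_span ⟨δ, rfl⟩)
  obtain ⟨a, haA, ha⟩ := (Submodule.ne_bot_iff A).mp hA
  obtain ⟨v, hv⟩ := exists_basis_conj_of_top_le_span b
    (Submodule.eq_top_of_integralClosure_mul_mem hinj _ ha
      fun y hy => hA_le_span _ (A.smul_mem ⟨y, hy⟩ haA)).ge
  refine ⟨v, hv, fun x hx δ => ?_⟩
  obtain ⟨c, rfl⟩ := (hb x).mp hx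
  have hsmul : ∑ h : Δ, ((c h : fixedField Δ) : E) * (h : E ≃ₐ[F] E) b
      = ∑ h : Δ, (c h : fixedField Δ) • v h := by
    simp only [hv, Algebra.smul_def, IntermediateField.algebraMap_apply]
  rw [hsmul, v.repr_sum_self]
  exact (c δ).2

theorem sqrtInvDiff_ne_bot (p : ℕ) [Fact p.Prime] (E : Type*) [Field E]
    [Algebra ℚ_[p] E] [FiniteDimensional ℚ_[p] E]
    [Algebra ℤ_[p] E] [IsScalarTower ℤ_[p] ℚ_[p] E]
    [IsDedekindDomain ↥(integralClosure ℤ_[p] E)]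
    [IsFractionRing ↥(integralClosure ℤ_[p] E) E]
    {M : Ideal ↥(integralClosure ℤ_[p] E)} (hM : M ≠ ⊥) (d : ℕ) : sqrtInvDiff p E M d ≠ ⊥ :=
  fun h => zpow_ne_zero _ (FractionalIdeal.coeIdeal_ne_zero.mpr hM)
    (FractionalIdeal.coeToSubmodule_eq_bot.mp h)

theorem stmt11_general (p : ℕ) [Fact p.Prime] (F E : Type*) [Field F] [Field E]
    [Algebra ℚ_[p] F]
    [Algebra ℚ_[p] E] [FiniteDimensional ℚ_[p] E]
    [Algebra F E] [IsScalarTower ℚ_[p] F E]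
    [Algebra ℤ_[p] E] [IsScalarTower ℤ_[p] ℚ_[p] E]
    [IsDedekindDomain ↥(integralClosure ℤ_[p] E)]
    [IsFractionRing ↥(integralClosure ℤ_[p] E) E]
    [Fintype (E ≃ₐ[F] E)]
    (M : Ideal ↥(integralClosure ℤ_[p] E)) (hM : M.IsMaximal)
    (Δ : Subgroup (E ≃ₐ[F] E))
    (B' : IntermediateField F E) (hB' : B' = IntermediateField.fixedField Δ)
    [Algebra ℤ_[p] ↥B'] [IsScalarTower ℤ_[p] ↥B' E]
    (d : ℕ)
    (b : E)
    (hb : ∀ x : E, x ∈ sqrtInvDiff p E M d ↔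
      ∃ c : ↥Δ → ↥(integralClosure ℤ_[p] ↥B'),
        x = ∑ h : ↥Δ, ((c h : ↥B') : E) * (h : E ≃ₐ[F] E) b) :
    ((∀ h : E ≃ₐ[F] E, h ∈ Δ → ∀ g : E ≃ₐ[F] E,
        hMap F E Δ b (h * g) = h (hMap F E Δ b g)) ∧
      ∀ g : E ≃ₐ[F] E, hMap F E Δ b g ∈ sqrtInvDiff p E M d) ∧
    ∀ f : (E ≃ₐ[F] E) → E,
      ((∀ h : E ≃ₐ[F] E, h ∈ Δ → ∀ g : E ≃ₐ[F] E, f (h * g) = h (f g)) ∧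
        ∀ g : E ≃ₐ[F] E, f g ∈ sqrtInvDiff p E M d) →
      ∃! c : (E ≃ₐ[F] E) → ↥(integralClosure ℤ_[p] ↥B'),
        ∀ g : E ≃ₐ[F] E,
          f g = ∑ γ : E ≃ₐ[F] E, ((c γ : ↥B') : E) * hMap F E Δ b (g * γ) := by
  subst hB'
  have : FiniteDimensional F E := FiniteDimensional.right ℚ_[p] F E
  have : Algebra.IsAlgebraic ℤ_[p] E :=
    (IsFractionRing.comap_isAlgebraic_iff (K := ℚ_[p])).mpr inferInstance
  have hinj : Function.Injective (algebraMap ℤ_[p] E) := by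
    rw [IsScalarTower.algebraMap_eq ℤ_[p] ℚ_[p] E]
    exact (algebraMap ℚ_[p] E).injective.comp (IsFractionRing.injective ℤ_[p] ℚ_[p])
  have hA : sqrtInvDiff p E M d ≠ ⊥ := sqrtInvDiff_ne_bot p E
    (ne_bot_of_isMaximal_integralClosure (IsDiscreteValuationRing.not_isField ℤ_[p]) hinj hM) d
  obtain ⟨v, hv, hrepr⟩ := exists_basis_conj_repr_mem_integralClosure hinj hA hb
  have hconj_mem (δ : Δ) : (δ : E ≃ₐ[F] E) b ∈ sqrtInvDiff p E M d :=
    (hb _).mpr ⟨Pi.single δ 1, by simp [Pi.single_apply, apply_ite]⟩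
  refine ⟨⟨fun h hh g => hMap_mul_of_mem Δ b hh g, hMap_mem Δ b hconj_mem⟩, fun f hf =>
    ⟨fun γ => ⟨v.repr (f γ⁻¹) 1, hrepr _ (hf.2 _) 1⟩,
      (eq_sum_mul_hMap_iff hv hf.1 _).mpr fun γ => rfl,
      fun c hc => funext fun γ => Subtype.ext ((eq_sum_mul_hMap_iff hv hf.1 _).mp hc γ)⟩⟩

/-- **`h_b` is a free generator of `Map_Δ(Γ, A)` over `O_B[Γ]`.**
Let `E/F` be a tamely ramified finite Galois extension of `p`-adic fields with
`Γ = Gal(E/F)`, `Δ = Γ₀` the inertia subgroup and `B = E^Δ`.  Suppose `v_E(𝔇_{E/F})` is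
even, so that `A := A_{E/F}` exists, and let `b ∈ E` be such that `A = O_B[Δ]·b`.  Define
`h_b : Γ → E` by `h_b(g) = g(b)` if `g ∈ Δ` and `h_b(g) = 0` otherwise.  Then `h_b` belongs
to `Map_Δ(Γ, A)` and generates `Map_Δ(Γ, A)` freely as an `O_B[Γ]`-module: every
`f ∈ Map_Δ(Γ, A)` has a unique expansion `f = Σ_γ c_γ·(γ·h_b)` with coefficients
`c_γ ∈ O_B`. -/
theorem stmt11 (p : ℕ) [Fact p.Prime] (F E : Type*) [Field F] [Field E]
    [Algebra ℚ_[p] F] [FiniteDimensional ℚ_[p] F]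
    [Algebra ℚ_[p] E] [FiniteDimensional ℚ_[p] E]
    [Algebra F E] [IsScalarTower ℚ_[p] F E] [IsGalois F E]
    [Algebra ℤ_[p] F] [IsScalarTower ℤ_[p] ℚ_[p] F]
    [Algebra ℤ_[p] E] [IsScalarTower ℤ_[p] ℚ_[p] E]
    [Algebra ↥(integralClosure ℤ_[p] F) ↥(integralClosure ℤ_[p] E)]
    [Algebra ↥(integralClosure ℤ_[p] F) E]
    [IsScalarTower ↥(integralClosure ℤ_[p] F) ↥(integralClosure ℤ_[p] E) E]
    [IsScalarTower ↥(integralClosure ℤ_[p] F) F E]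
    [NoZeroSMulDivisors ↥(integralClosure ℤ_[p] F) ↥(integralClosure ℤ_[p] E)]
    [IsIntegrallyClosed ↥(integralClosure ℤ_[p] F)]
    [IsDedekindDomain ↥(integralClosure ℤ_[p] E)]
    [IsFractionRing ↥(integralClosure ℤ_[p] E) E]
    [Fintype (E ≃ₐ[F] E)]
    (M : Ideal ↥(integralClosure ℤ_[p] E)) (hM : M.IsMaximal)
    (htame : ∀ σ : E ≃ₐ[F] E, inRamificationGroup p F E M 1 σ → σ = 1)
    (Δ : Subgroup (E ≃ₐ[F] E)) (hΔ : ∀ σ, σ ∈ Δ ↔ inRamificationGroup p F E M 0 σ)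
    (B' : IntermediateField F E) (hB' : B' = IntermediateField.fixedField Δ)
    [Algebra ℤ_[p] ↥B'] [IsScalarTower ℤ_[p] ↥B' E]
    (d : ℕ)
    (hd : differentIdeal ↥(integralClosure ℤ_[p] F) ↥(integralClosure ℤ_[p] E) = M ^ d)
    (hEven : Even d)
    (b : E)
    (hb : ∀ x : E, x ∈ sqrtInvDiff p E M d ↔
      ∃ c : ↥Δ → ↥(integralClosure ℤ_[p] ↥B'),
        x = ∑ h : ↥Δ, ((c h : ↥B') : E) * (h : E ≃ₐ[F] E) b) :
    ((∀ h : E ≃ₐ[F] E, h ∈ Δ → ∀ g : E ≃ₐ[F] E,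
        hMap F E Δ b (h * g) = h (hMap F E Δ b g)) ∧
      ∀ g : E ≃ₐ[F] E, hMap F E Δ b g ∈ sqrtInvDiff p E M d) ∧
    ∀ f : (E ≃ₐ[F] E) → E,
      ((∀ h : E ≃ₐ[F] E, h ∈ Δ → ∀ g : E ≃ₐ[F] E, f (h * g) = h (f g)) ∧
        ∀ g : E ≃ₐ[F] E, f g ∈ sqrtInvDiff p E M d) →
      ∃! c : (E ≃ₐ[F] E) → ↥(integralClosure ℤ_[p] ↥B'),
        ∀ g : E ≃ₐ[F] E,
          f g = ∑ γ : E ≃ₐ[F] E, ((c γ : ↥B') : E) * hMap F E Δ b (g * γ) :=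
  stmt11_general p F E M hM Δ B' hB' d b hb
end
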